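/- arXiv:1304.6815 — 2 statements merged into one kernel-verified Lean document; each statement's English description precedes it below -/
import Mathlib

section
/- Let S̃ be a real skew-symmetric n×n matrix and S = i·S̃. Then there exists a real symmetric n×n matrix Ξ₁ such that Ξ₁ + S is positive semidefinite (as a complex Hermitian matrix) and rank(Ξ₁ + S) = (1/2)·rank(S̃). -/
/-!
Put `H = i S̃`, a Hermitian matrix, and `X = |H|` through the functional calculus. Then `X + H`
is positive semidefinite and its rank is the number of positive eigenvalues of `H`. Since `S̃` is
real, entrywise conjugation sends `H` to `-H`, so it fixes `X` (`|·|` is even) and sends `X + H`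
to `X - H`. Hence `X` is real, and the rank of `X + H` is also the number of negative eigenvalues
of `H`. So twice that rank is the number of nonzero eigenvalues, which is `rank H = rank S̃`.
-/

open Matrix ComplexOrder

lemma abs_add_self_ne_zero_iff {α : Type*} [AddCommGroup α] [LinearOrder α]
    [IsOrderedAddMonoid α] {x : α} : |x| + x ≠ 0 ↔ 0 < x := by
  rcases le_or_gt x 0 with hx | hx
  · simp [abs_of_nonpos hx, hx.not_gt]
  · simp [abs_of_pos hx, hx, (add_pos hx hx).ne']

lemma Fintype.card_ne_zero_eq_card_pos_add_card_neg {ι α : Type*} [Fintype ι] [LinearOrder α]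
    [Zero α] (f : ι → α) :
    card {i // f i ≠ 0} = card {i // 0 < f i} + card {i // f i < 0} := by
  classical
  rw [← card_subtype_or_disjoint _ _ fun p hp hq i hi => (hp i hi).asymm (hq i hi)]
  exact card_congr (Equiv.subtypeEquivRight fun i => ne_iff_lt_or_gt.trans or_comm)

namespace Matrix

lemma rank_fromBlocks_one_zero {F ι κ : Type*} [Field F] [Fintype ι] [Fintype κ]
    [DecidableEq ι] [DecidableEq κ] :
    (fromBlocks (1 : Matrix ι ι F) 0 0 (0 : Matrix κ κ F)).rank = Fintype.card ι := by
  classical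
  rw [← diagonal_one, ← diagonal_zero, fromBlocks_diagonal, rank_diagonal]
  simp [Fintype.card_subtype, Finset.card_filter, Fintype.sum_sum_type]

lemma rank_map {m K L : Type*} [Fintype m] [DecidableEq m] [Field K] [Field L] (f : K →+* L)
    (A : Matrix m m K) : (A.map f).rank = A.rank := by
  obtain ⟨V, U, e, hV, hU, hA⟩ := exists_rank_normal_form A
  -- `f` carries the rank normal form of `A` over `K` to a normal form of `A.map f` over `L`.
  have hAf : f.mapMatrix V * f.mapMatrix A * f.mapMatrix U =
      (fromBlocks 1 0 0 0).submatrix e e := by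
    rw [← map_mul, ← map_mul, hA, RingHom.mapMatrix_apply, ← submatrix_map, fromBlocks_map]
    simp
  change (f.mapMatrix A).rank = _
  rw [← rank_mul_eq_left_of_isUnit_det _ _ ((isUnit_iff_isUnit_det _).1 (hU.map f.mapMatrix)),
    ← rank_mul_eq_right_of_isUnit_det _ _ ((isUnit_iff_isUnit_det _).1 (hV.map f.mapMatrix)),
    ← Matrix.mul_assoc, hAf, rank_submatrix, rank_fromBlocks_one_zero, Fintype.card_fin]

lemma map_re_map_ofReal_of_map_conj_eq {m n : Type*} {X : Matrix m n ℂ}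
    (h : X.map (starRingEnd ℂ) = X) : (X.map Complex.re).map (Complex.ofReal ·) = X := by
  ext i j
  exact Complex.conj_eq_iff_re.mp (congrFun₂ h i j)

lemma IsHermitian.transpose_eq_of_map_conj_eq {n : Type*} {X : Matrix n n ℂ}
    (hX : X.IsHermitian) (h : X.map (starRingEnd ℂ) = X) : Xᵀ = X := by
  conv_lhs => rw [← h]
  exact hX

variable {n : Type*} [Fintype n] [DecidableEq n]

lemma IsHermitian.rank_cfc {𝕜 : Type*} [RCLike 𝕜] {A : Matrix n n 𝕜} (hA : A.IsHermitian)
    (f : ℝ → ℝ) : (cfc f A).rank = Fintype.card {i // f (hA.eigenvalues i) ≠ 0} := by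
  have hU := UnitaryGroup.det_isUnit hA.eigenvectorUnitary
  rw [hA.cfc_eq, IsHermitian.cfc, Unitary.conjStarAlgAut_apply,
    rank_mul_eq_left_of_isUnit_det _ _ (by simpa [star_eq_conjTranspose] using hU.star),
    rank_mul_eq_right_of_isUnit_det _ _ hU, rank_diagonal]
  simp

def conjStarAlgHom : Matrix n n ℂ →⋆ₐ[ℝ] Matrix n n ℂ :=
  { (Complex.conjAe : ℂ →ₐ[ℝ] ℂ).mapMatrix with
    map_star' := fun M => by ext; simp }

lemma IsHermitian.map_conj_cfc {A : Matrix n n ℂ} (hA : A.IsHermitian) (f : ℝ → ℝ) :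
    (cfc f A).map (starRingEnd ℂ) = cfc f (A.map (starRingEnd ℂ)) :=
  conjStarAlgHom.map_cfc f A (A.finite_real_spectrum.continuousOn f)
    (continuous_id.matrix_map Complex.continuous_conj)

lemma IsHermitian.map_conj_cfc_of_map_conj_eq_neg {A : Matrix n n ℂ} (hA : A.IsHermitian)
    (hconj : A.map (starRingEnd ℂ) = -A) (f : ℝ → ℝ) :
    (cfc f A).map (starRingEnd ℂ) = cfc (fun x => f (-x)) A := by
  rw [hA.map_conj_cfc, hconj, cfc_comp_neg f A ((A.finite_real_spectrum.image _).continuousOn f)]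

/-- If conjugation negates `A`, its positive and negative eigenvalues are equinumerous. -/
lemma IsHermitian.two_mul_rank_cfc_abs_add_self {A : Matrix n n ℂ} (hA : A.IsHermitian)
    (hconj : A.map (starRingEnd ℂ) = -A) :
    2 * (cfc (fun x : ℝ => |x| + x) A).rank = A.rank := by
  have hpos : (cfc (fun x : ℝ => |x| + x) A).rank = Fintype.card {i // 0 < hA.eigenvalues i} := by
    rw [hA.rank_cfc]
    exact Fintype.card_congr (Equiv.subtypeEquivRight fun i => abs_add_self_ne_zero_iff)
  have hneg : (cfc (fun x : ℝ => |x| + x) A).rank = Fintype.card {i // hA.eigenvalues i < 0} := by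
    rw [← rank_map (starRingEnd ℂ), hA.map_conj_cfc_of_map_conj_eq_neg hconj, hA.rank_cfc]
    exact Fintype.card_congr (Equiv.subtypeEquivRight fun i =>
      abs_add_self_ne_zero_iff.trans neg_pos)
  rw [hA.rank_eq_card_non_zero_eigs, Fintype.card_ne_zero_eq_card_pos_add_card_neg, ← hpos,
    ← hneg, two_mul]

end Matrix

open scoped MatrixOrder in
theorem stmt_5 {n : Type*} [Fintype n] [DecidableEq n] (St : Matrix n n ℝ)
    (hskew : Stᵀ = -St) :
    ∃ Ξ₁ : Matrix n n ℝ, Ξ₁ᵀ = Ξ₁ ∧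
      (Ξ₁.map (Complex.ofReal ·) + Complex.I • St.map (Complex.ofReal ·)).PosSemidef ∧
      2 * (Ξ₁.map (Complex.ofReal ·) + Complex.I • St.map (Complex.ofReal ·)).rank = St.rank := by
  set H := Complex.I • St.map (Complex.ofReal ·)
  have hH : H.IsHermitian := by
    ext i j
    have hji := congrFun₂ hskew j i
    simp only [transpose_apply] at hji
    simp [H, hji]
  have hconj : H.map (starRingEnd ℂ) = -H := by
    ext i j
    simp [H]
  set X := cfc (fun x : ℝ => |x|) H
  have hX_real : X.map (starRingEnd ℂ) = X := by
    simpa only [abs_neg] using hH.map_conj_cfc_of_map_conj_eq_neg hconj (fun x : ℝ => |x|)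
  have hXH : X + H = cfc (fun x : ℝ => |x| + x) H := by
    rw [cfc_add .., cfc_id' ℝ H]
  refine ⟨X.map Complex.re, ?_, ?_, ?_⟩
  · have hX : X.IsHermitian := cfc_predicate _ H
    rw [← transpose_map, hX.transpose_eq_of_map_conj_eq hX_real]
  · rw [map_re_map_ofReal_of_map_conj_eq hX_real, hXH]
    exact (cfc_nonneg fun x _ => neg_le_iff_add_nonneg'.mp (neg_abs_le x)).posSemidef
  · rw [map_re_map_ofReal_of_map_conj_eq hX_real, hXH, hH.two_mul_rank_cfc_abs_add_self hconj,
      rank_smul_of_mem_nonZeroDivisors _ (mem_nonZeroDivisors_of_ne_zero Complex.I_ne_zero)]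
    exact rank_map Complex.ofRealHom St
end

section
/- Let S be a Hermitian matrix of the form S = iS̃ with S̃ real skew-symmetric, and let Ξ₂ = Λ†Λ for some complex matrix Λ, where the imaginary part of Ξ₂ equals (1/4)S̃ (i.e., Ξ₂ = Ξ₁ + (i/4)S̃ with Ξ₁ = Re(Ξ₂) real). Then the number of rows of Λ is at least (1/2)·rank(S̃). -/
/-!
Writing `Λ = A + iB` with `A, B` real, `Im (Λᴴ Λ) = Aᵀ B - Bᵀ A = [Aᵀ Bᵀ] [B; -A]`, a product
through `2m` dimensions, so `S̃ = 4 Im (Λᴴ Λ)` has rank at most `2m`.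
-/

open Matrix

namespace Matrix

variable {m n R : Type*} [Fintype m]

theorem rank_transpose_mul_sub_transpose_mul_le [Fintype n] [CommRing R] [StrongRankCondition R]
    (A B : Matrix m n R) : (Aᵀ * B - Bᵀ * A).rank ≤ 2 * Fintype.card m := by
  have hfactor : Aᵀ * B - Bᵀ * A = fromCols Aᵀ Bᵀ * fromRows B (-A) := by
    rw [fromCols_mul_fromRows, Matrix.mul_neg, sub_eq_add_neg]
  calc (Aᵀ * B - Bᵀ * A).rank ≤ Fintype.card (m ⊕ m) := by
        rw [hfactor]
        exact (rank_mul_le_right _ _).trans (rank_le_card_height _)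
    _ = 2 * Fintype.card m := by rw [Fintype.card_sum, two_mul]

theorem map_im_conjTranspose_mul_self (Λ : Matrix m n ℂ) :
    (Λᴴ * Λ).map Complex.im =
      (Λ.map Complex.re)ᵀ * Λ.map Complex.im - (Λ.map Complex.im)ᵀ * Λ.map Complex.re := by
  ext i j
  simp only [map_apply, sub_apply, mul_apply, transpose_apply, conjTranspose_apply,
    Complex.im_sum, Complex.mul_im, Complex.star_def, Complex.conj_re, Complex.conj_im,
    ← Finset.sum_sub_distrib]
  exact Finset.sum_congr rfl fun k _ => by ring

end Matrix

theorem stmt_15_general {n : Type*} [Fintype n] {m : ℕ}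
    (St : Matrix n n ℝ)
    (Λ : Matrix (Fin m) n ℂ)
    (him : ∀ i j, ((Λᴴ * Λ) i j).im = St i j / 4) :
    St.rank ≤ 2 * m := by
  have hSt : St = (4 : ℝ) • (Λᴴ * Λ).map Complex.im := by
    ext i j
    rw [Matrix.smul_apply, map_apply, him, smul_eq_mul]
    ring
  rw [hSt, rank_smul_of_mem_nonZeroDivisors _ (mem_nonZeroDivisors_of_ne_zero four_ne_zero),
    map_im_conjTranspose_mul_self]
  simpa using rank_transpose_mul_sub_transpose_mul_le (Λ.map Complex.re) (Λ.map Complex.im)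

theorem stmt_15 {n : Type*} [Fintype n] [DecidableEq n] {m : ℕ}
    (St : Matrix n n ℝ) (hskew : Stᵀ = -St)
    (Λ : Matrix (Fin m) n ℂ)
    (him : ∀ i j, ((Λᴴ * Λ) i j).im = St i j / 4) :
    St.rank ≤ 2 * m :=
  stmt_15_general St Λ him
end
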